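/- arXiv:0910.0369 — 2 statements merged into one kernel-verified Lean document; each statement's English description precedes it below -/
import Mathlib

section
/- Let λ ∈ ℂ with 0 < |λ| < 1, and let m ≥ 1 be an integer. There is no function f holomorphic on a punctured disc around 0 in ℂ satisfying f(λ^m z) = f(z) + c for a nonzero constant c. -/
open Complex Set intervalIntegral

lemma circ_aux (ρ : ℝ) (hρ : ρ ≠ 0) (f : ℂ → ℂ) :
    (∮ z in C((0:ℂ), ρ), z⁻¹ • f z) =
      ∫ θ in (0:ℝ)..2 * Real.pi, I • f (circleMap 0 ρ θ) := by
  simp only [circleIntegral, deriv_circleMap, smul_eq_mul]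
  congr 1; ext θ
  have h : circleMap 0 ρ θ ≠ 0 := circleMap_ne_center hρ
  field_simp

/-- There is no holomorphic function on a punctured disc with f(λ^m z) = f(z) + c, c ≠ 0. -/
theorem no_additive_equivariant_function (l : ℂ) (hl0 : 0 < ‖l‖)
    (hl1 : ‖l‖ < 1) (m : ℕ) (hm : 1 ≤ m) (r : ℝ) (hr : 0 < r)
    (f : ℂ → ℂ) (c : ℂ) (hc : c ≠ 0)
    (hf : DifferentiableOn ℂ f {z : ℂ | 0 < ‖z‖ ∧ ‖z‖ < r})
    (heq : ∀ z : ℂ, 0 < ‖z‖ → ‖z‖ < r →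
      f (l ^ m * z) = f z + c) : False := by
  set S := {z : ℂ | 0 < ‖z‖ ∧ ‖z‖ < r} with hS
  have hSopen : IsOpen S := by
    have : S = ((fun z : ℂ => ‖z‖) ⁻¹' Ioi 0) ∩ ((fun z : ℂ => ‖z‖) ⁻¹' Iio r) := by
      ext z; simp [S, Set.mem_setOf_eq, and_comm]
    rw [this]
    exact (isOpen_Ioi.preimage continuous_norm).inter
      (isOpen_Iio.preimage continuous_norm)
  set w : ℂ := l ^ m with hw
  have hwabs : ‖w‖ = ‖l‖ ^ m := by simp [hw]
  have hw0 : 0 < ‖w‖ := by rw [hwabs]; positivity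
  have hw1 : ‖w‖ < 1 := by
    rw [hwabs]
    calc ‖l‖ ^ m ≤ ‖l‖ ^ 1 :=
          pow_le_pow_of_le_one hl0.le hl1.le hm
      _ = ‖l‖ := pow_one _
      _ < 1 := hl1
  set s : ℝ := r / 2 with hs
  have hs0 : 0 < s := by positivity
  have hsr : s < r := by simp [hs]; linarith
  set ρ : ℝ := ‖w‖ * s with hρdef
  have hρ0 : 0 < ρ := mul_pos hw0 hs0
  have hρs : ρ < s := by
    have := mul_lt_of_lt_one_left hs0 hw1
    simpa [hρdef] using this
  -- membership of annulus points in S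
  have hsub : Metric.closedBall (0:ℂ) s \ Metric.ball 0 ρ ⊆ S := by
    intro z hz
    simp only [Metric.mem_closedBall, Metric.mem_ball, dist_zero_right, Set.mem_diff,
      not_lt] at hz
    refine ⟨lt_of_lt_of_le hρ0 hz.2, lt_of_le_of_lt hz.1 hsr⟩
  -- continuity of f at points of S
  have hfc : ∀ z ∈ S, ContinuousAt f z := fun z hz =>
    (hf.differentiableAt (hSopen.mem_nhds hz)).continuousAt
  -- annulus equality
  have hE : (∮ z in C((0:ℂ), s), z⁻¹ • f z) = ∮ z in C((0:ℂ), ρ), z⁻¹ • f z := by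
    have h := circleIntegral_sub_center_inv_smul_eq_of_differentiable_on_annulus_off_countable
      (c := (0:ℂ)) (r := ρ) (R := s) hρ0 hρs.le (f := f) (s := (∅ : Set ℂ))
      Set.countable_empty
      (fun z hz => (hfc z (hsub hz)).continuousWithinAt)
      (fun z hz => by
        refine hf.differentiableAt (hSopen.mem_nhds ?_)
        apply hsub
        rcases hz.1 with ⟨h1, h2⟩
        exact ⟨Metric.ball_subset_closedBall h1, fun h => h2 (Metric.ball_subset_closedBall h)⟩)
    simpa using h
  rw [circ_aux s hs0.ne' f, circ_aux ρ hρ0.ne' f] at hE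
  -- rewrite the inner integral using the functional equation and periodicity
  have hgcont : Continuous fun θ : ℝ => f (circleMap 0 s θ) := by
    refine continuous_iff_continuousAt.2 fun θ => ?_
    have hmem : circleMap 0 s θ ∈ S := by
      constructor <;> simp [norm_circleMap_zero, abs_of_pos hs0]
      · exact hs0
      · exact hsr
    exact (hfc _ hmem).comp (continuous_circleMap 0 s).continuousAt
  have hper : Function.Periodic (fun θ : ℝ => I • f (circleMap 0 ρ θ)) (2 * Real.pi) :=
    fun θ => by simp [periodic_circleMap 0 ρ θ]
  set a : ℝ := Complex.arg w with ha
  have hkey : ∀ θ : ℝ, circleMap 0 ρ (θ + a) = w * circleMap 0 s θ := by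
    intro θ
    have habs : (↑‖w‖ : ℂ) * Complex.exp (↑a * I) = w :=
      Complex.norm_mul_exp_arg_mul_I w
    simp only [circleMap, zero_add, hρdef]
    push_cast
    conv_rhs => rw [← habs]
    rw [add_mul, Complex.exp_add]
    ring
  have hstep : (∫ θ in (0:ℝ)..2 * Real.pi, I • f (circleMap 0 ρ θ)) =
      (∫ θ in (0:ℝ)..2 * Real.pi, I • f (circleMap 0 s θ)) + (2 * Real.pi : ℝ) • (I * c) := by
    have h1 : (∫ θ in (0:ℝ)..2 * Real.pi, I • f (circleMap 0 ρ θ)) =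
        ∫ θ in (0:ℝ)..2 * Real.pi, I • f (circleMap 0 ρ (θ + a)) := by
      rw [intervalIntegral.integral_comp_add_right (fun θ => I • f (circleMap 0 ρ θ)) a]
      have := hper.intervalIntegral_add_eq a 0
      simpa [add_comm] using this.symm
    rw [h1]
    have h2 : ∀ θ : ℝ, I • f (circleMap 0 ρ (θ + a)) = I • f (circleMap 0 s θ) + I * c := by
      intro θ
      rw [hkey θ, heq (circleMap 0 s θ)
        (by simp [norm_circleMap_zero, abs_of_pos hs0, hs0])
        (by simp [norm_circleMap_zero, abs_of_pos hs0]; exact hsr)]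
      simp [smul_eq_mul]; ring
    simp only [h2]
    rw [intervalIntegral.integral_add (f := fun θ => I • f (circleMap 0 s θ)) ((hgcont.const_smul I).intervalIntegrable 0 (2 * Real.pi))
      (intervalIntegrable_const)]
    simp [smul_eq_mul]
    ring
  rw [hstep] at hE
  have : (2 * Real.pi : ℝ) • (I * c) = 0 := by linear_combination -hE
  have hπ : (2 * Real.pi : ℝ) ≠ 0 := by positivity
  rw [smul_eq_zero] at this
  rcases this with h | h
  · exact hπ h
  · exact hc (by simpa [Complex.I_ne_zero] using mul_eq_zero.mp h |>.resolve_left Complex.I_ne_zero)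
end

section
/- Let F(z₁,z₂) = (λz₁, λ^m z₂ + z₁^m) with 0 < |λ| < 1 and m ≥ 1. If f is holomorphic on ℂ² and satisfies f∘F = a·f for a nonzero constant a, then either f = 0 or a = λ^k for some nonnegative integer k and f(z₁,z₂) = c·z₁^k for a constant c. -/
open Complex Finset Nat Polynomial Metric



private lemma iterDeriv_zero_fun (n : ℕ) : iteratedDeriv n (fun _ : ℂ => (0:ℂ)) = fun _ => 0 := by
  induction n with
  | zero => simp [iteratedDeriv_zero]
  | succ n ih =>
    rw [iteratedDeriv_succ']
    have h : deriv (fun _ : ℂ => (0:ℂ)) = fun _ : ℂ => (0:ℂ) := by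
      funext x; simp
    rw [h]; exact ih

private lemma my_const_mul {n : ℕ} (c : ℂ) {f : ℂ → ℂ} (hf : ContDiff ℂ n f) (x : ℂ) :
    iteratedDeriv n (fun z => c * f z) x = c * iteratedDeriv n f x := by
  simp only [← iteratedDerivWithin_univ]
  exact iteratedDerivWithin_const_mul (Set.mem_univ x) uniqueDiffOn_univ c hf.contDiffWithinAt

private lemma my_sub {n : ℕ} {f g : ℂ → ℂ} (hf : ContDiff ℂ n f) (hg : ContDiff ℂ n g) (x : ℂ) :
    iteratedDeriv n (fun z => f z - g z) x = iteratedDeriv n f x - iteratedDeriv n g x := by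
  simp only [← iteratedDerivWithin_univ]
  have := iteratedDerivWithin_sub (Set.mem_univ x) uniqueDiffOn_univ hf.contDiffWithinAt hg.contDiffWithinAt
  simpa [Pi.sub_def] using this

private lemma iterDeriv_self_pow (n : ℕ) :
    iteratedDeriv n (fun t : ℂ => t ^ n) = fun _ => (n ! : ℂ) := by
  induction n with
  | zero => funext x; simp [iteratedDeriv_zero]
  | succ n ih =>
    funext x
    rw [iteratedDeriv_succ']
    have hd : deriv (fun t : ℂ => t ^ (n+1)) = fun t => ((n:ℂ) + 1) * t ^ n := by
      funext t
      simp [deriv_pow]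
    rw [hd]
    have h2 : iteratedDeriv n (fun t : ℂ => ((n:ℂ)+1) * t ^ n) x
        = ((n:ℂ)+1) * iteratedDeriv n (fun t : ℂ => t ^ n) x :=
      my_const_mul _ ((differentiable_pow n).contDiff) x
    rw [h2, ih]
    simp [Nat.factorial_succ]



private lemma entire_deriv {u : ℂ → ℂ} (hu : Differentiable ℂ u) : Differentiable ℂ (deriv u) :=
  (analyticOnNhd_univ_iff_differentiable).mp
    ((analyticOnNhd_univ_iff_differentiable.mpr hu).deriv)

/-- entire with polynomial growth of degree ≤ d has vanishing higher Taylor coefficients -/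
private lemma entire_polygrowth (d : ℕ) : ∀ (u : ℂ → ℂ), Differentiable ℂ u → ∀ M : ℝ,
    (∀ w, ‖u w‖ ≤ M * (1 + ‖w‖) ^ d) → ∀ q, d < q → iteratedDeriv q u 0 = 0 := by
  induction d with
  | zero =>
    intro u hu M hb q hq
    have hc : ∃ c, ∀ z, u z = c := by
      refine hu.exists_const_forall_eq_of_bounded ?_
      rw [isBounded_iff_forall_norm_le]
      exact ⟨M, by rintro x ⟨z, rfl⟩; simpa using hb z⟩
    obtain ⟨c, hc⟩ := hc
    obtain ⟨q', rfl⟩ : ∃ q', q = q' + 1 := ⟨q - 1, (Nat.succ_pred_eq_of_pos (by omega)).symm⟩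
    rw [iteratedDeriv_succ']
    have hder : deriv u = fun _ : ℂ => (0:ℂ) := by
      funext x
      rw [show u = fun _ => c from funext hc]
      simp
    rw [hder, iterDeriv_zero_fun]
  | succ d ih =>
    intro u hu M hb q hq
    have hM0 : 0 ≤ M := by
      have := hb 0
      simp only [norm_zero, add_zero, one_pow, mul_one] at this
      exact le_trans (norm_nonneg _) this
    -- derivative bound
    have hb' : ∀ c : ℂ, ‖deriv u c‖ ≤ (M * 2 ^ (d+1)) * (1 + ‖c‖) ^ d := by
      intro c
      have hR : (0:ℝ) < 1 + ‖c‖ := by positivity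
      have key : ‖deriv u c‖ ≤ (M * (2 * (1 + ‖c‖)) ^ (d+1)) / (1 + ‖c‖) := by
        refine Complex.norm_deriv_le_of_forall_mem_sphere_norm_le hR hu.diffContOnCl ?_
        intro z hz
        have hz' : ‖z - c‖ = 1 + ‖c‖ := by simpa [Metric.mem_sphere, dist_eq_norm] using hz
        have h1 : ‖z‖ ≤ ‖c‖ + (1 + ‖c‖) := by
          calc ‖z‖ = ‖c + (z - c)‖ := by ring_nf
          _ ≤ ‖c‖ + ‖z - c‖ := norm_add_le _ _
          _ = ‖c‖ + (1 + ‖c‖) := by rw [hz']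
        calc ‖u z‖ ≤ M * (1 + ‖z‖) ^ (d+1) := hb z
        _ ≤ M * (2 * (1 + ‖c‖)) ^ (d+1) := by
            apply mul_le_mul_of_nonneg_left _ hM0
            apply pow_le_pow_left₀ (by positivity)
            linarith
      calc ‖deriv u c‖ ≤ (M * (2 * (1 + ‖c‖)) ^ (d+1)) / (1 + ‖c‖) := key
      _ = (M * 2 ^ (d+1)) * (1 + ‖c‖) ^ d := by
          rw [mul_pow]
          field_simp
          ring
    have hres := ih (deriv u) (entire_deriv hu) (M * 2 ^ (d+1)) hb'
    obtain ⟨q', rfl⟩ : ∃ q', q = q' + 1 := ⟨q - 1, (Nat.succ_pred_eq_of_pos (by omega)).symm⟩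
    rw [iteratedDeriv_succ']
    exact hres q' (by omega)


private lemma poly_rep {u : ℂ → ℂ} (hu : Differentiable ℂ u) (d : ℕ)
    (h : ∀ q, d < q → iteratedDeriv q u 0 = 0) (w : ℂ) :
    u w = ∑ q ∈ Finset.range (d+1), (q ! : ℂ)⁻¹ * iteratedDeriv q u 0 * w ^ q := by
  have ht := Complex.taylorSeries_eq_of_entire' (c := 0) (z := w) hu
  rw [← ht]
  rw [tsum_eq_sum (s := Finset.range (d+1))]
  · exact Finset.sum_congr rfl fun q _ => by rw [sub_zero]
  · intro q hq
    rw [h q (by simpa using hq)]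
    ring

/-- one-variable eigenfunctions of `t ↦ l * t` are monomials -/
private lemma one_var {l : ℂ} (hl0 : l ≠ 0) (hl1 : ‖l‖ < 1) (b : ℂ) (G : ℂ → ℂ)
    (hG : Differentiable ℂ G) (h : ∀ t, G (l * t) = b * G t) (hne : ¬ ∀ t, G t = 0) :
    ∃ k c, c ≠ 0 ∧ b = l ^ k ∧ ∀ t, G t = c * t ^ k := by
  set D : ℕ → ℂ := fun n => iteratedDeriv n G 0 with hD
  have key : ∀ n, l ^ n * D n = b * D n := by
    intro n
    have e1 : (fun t => G (l * t)) = fun t => b * G t := funext h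
    have e2 : iteratedDeriv n (fun t => G (l * t)) 0 = l ^ n * iteratedDeriv n G (l * 0) := by
      rw [iteratedDeriv_comp_const_mul hG.contDiff l]
    have e3 : iteratedDeriv n (fun t => b * G t) 0 = b * iteratedDeriv n G 0 := by
      simp only [← iteratedDerivWithin_univ]
      exact iteratedDerivWithin_const_mul (Set.mem_univ 0) uniqueDiffOn_univ b hG.contDiff.contDiffWithinAt
    rw [← e3, ← e1, e2, mul_zero]
  have hex : ∃ k, D k ≠ 0 := by
    by_contra hnn
    push_neg at hnn
    apply hne
    intro t
    have ht := Complex.taylorSeries_eq_of_entire' (c := 0) (z := t) hG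
    rw [← ht]
    have : ∀ n : ℕ, (n ! : ℂ)⁻¹ * iteratedDeriv n G 0 * (t - 0) ^ n = 0 := by
      intro n; rw [show iteratedDeriv n G 0 = 0 from hnn n]; ring
    simp only [this, tsum_zero]
  obtain ⟨k, hk⟩ := hex
  have hbk : b = l ^ k := by
    have := key k
    rcases mul_eq_mul_right_iff.mp this with h1 | h2
    · exact h1.symm
    · exact absurd h2 hk
  have hinj : ∀ n, n ≠ k → D n = 0 := by
    intro n hn
    by_contra hDn
    have := key n
    rw [hbk] at this
    have hpow : l ^ n = l ^ k := by
      rcases mul_eq_mul_right_iff.mp this with h1 | h2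
      · exact h1
      · exact absurd h2 hDn
    have hnorm : ‖l‖ ^ n = ‖l‖ ^ k := by
      rw [← norm_pow, ← norm_pow, hpow]
    have hsa : StrictAnti (fun n : ℕ => ‖l‖ ^ n) :=
      pow_right_strictAnti₀ (norm_pos_iff.mpr hl0) hl1
    exact hn (hsa.injective hnorm)
  refine ⟨k, (k ! : ℂ)⁻¹ * D k, ?_, hbk, ?_⟩
  · refine mul_ne_zero ?_ hk
    simp [Nat.factorial_ne_zero]
  · intro t
    have ht := Complex.taylorSeries_eq_of_entire' (c := 0) (z := t) hG
    rw [← ht]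
    rw [tsum_eq_single k]
    · rw [sub_zero]
    · intro n hn
      rw [show iteratedDeriv n G 0 = 0 from hinj n hn]
      ring


private lemma coeff_CXC_pow (u v : ℂ) (q j : ℕ) :
    ((C u * X + C v) ^ q).coeff j = (q.choose j : ℂ) * u ^ j * v ^ (q - j) := by
  rw [add_pow, finset_sum_coeff]
  have hterm : ∀ i, (C u * X) ^ i * (C v) ^ (q - i) * (q.choose i : ℂ[X])
      = C (u ^ i * v ^ (q - i) * (q.choose i : ℂ)) * X ^ i := by
    intro i
    rw [C_mul, C_mul, C_pow, C_pow, ← C_eq_natCast]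
    ring
  simp only [hterm, coeff_C_mul, coeff_X_pow, mul_ite, mul_one, mul_zero]
  rw [Finset.sum_ite_eq (Finset.range (q+1)) j
    (fun i => u ^ i * v ^ (q - i) * (q.choose i : ℂ))]
  by_cases hj : j ∈ Finset.range (q+1)
  · rw [if_pos hj]; ring
  · rw [if_neg hj]
    have : q.choose j = 0 := Nat.choose_eq_zero_of_lt (by simpa using hj)
    rw [this]
    simp

private lemma vandermonde_recover (d : ℕ) :
    ∃ E : Fin (d+1) → Fin (d+1) → ℂ, ∀ β : Fin (d+1) → ℂ, ∀ q,
      β q = ∑ i, E q i * ∑ p, β p * ((i : ℕ) : ℂ) ^ (p : ℕ) := by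
  set v : Fin (d+1) → ℂ := fun i => ((i : ℕ) : ℂ) with hv
  set A : Matrix (Fin (d+1)) (Fin (d+1)) ℂ := Matrix.vandermonde v with hA
  have hdet : A.det ≠ 0 := by
    rw [hA, Matrix.det_vandermonde_ne_zero_iff]
    intro i j hij
    exact Fin.ext (Nat.cast_injective hij)
  refine ⟨fun q i => A⁻¹ q i, fun β q => ?_⟩
  have h1 : ∀ i, (∑ p, β p * v i ^ (p : ℕ)) = A.mulVec β i := by
    intro i
    rw [Matrix.mulVec]
    simp only [dotProduct, hA, Matrix.vandermonde_apply]
    exact Finset.sum_congr rfl fun p _ => mul_comm _ _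
  calc β q = ((A⁻¹ * A).mulVec β) q := by
        rw [Matrix.nonsing_inv_mul A (isUnit_iff_ne_zero.mpr hdet), Matrix.one_mulVec]
  _ = (A⁻¹.mulVec (A.mulVec β)) q := by rw [← Matrix.mulVec_mulVec]
  _ = ∑ i, A⁻¹ q i * ∑ p, β p * v i ^ (p : ℕ) := by
        rw [Matrix.mulVec]
        simp only [dotProduct]
        exact Finset.sum_congr rfl fun i _ => by rw [h1]


/-- For the exceptional map F(z₁,z₂) = (λz₁, λ^m z₂ + z₁^m), every entire
eigensection f∘F = a·f is either zero or c·z₁^k with a = λ^k. -/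
theorem exceptional_eigensections (l : ℂ) (hl0 : 0 < ‖l‖)
    (hl1 : ‖l‖ < 1) (m : ℕ) (hm : 1 ≤ m)
    (a : ℂ) (ha : a ≠ 0) (f : ℂ × ℂ → ℂ) (hf : Differentiable ℂ f)
    (heq : ∀ z : ℂ × ℂ, f (l * z.1, l ^ m * z.2 + z.1 ^ m) = a * f z) :
    f = 0 ∨ ∃ (k : ℕ) (c : ℂ), a = l ^ k ∧ ∀ z : ℂ × ℂ, f z = c * z.1 ^ k := by
  classical
  have hlnpos : 0 < ‖l‖ := by exact hl0
  have hlt : ‖l‖ < 1 := by exact hl1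
  have hl0' : l ≠ 0 := norm_pos_iff.mp hlnpos
  set lm : ℂ := l ^ m with hlmdef
  have hlm0 : lm ≠ 0 := pow_ne_zero m hl0'
  have hs1 : ‖lm‖ < 1 := by
    calc ‖lm‖ = ‖l‖ ^ m := norm_pow l m
    _ ≤ ‖l‖ ^ 1 := pow_le_pow_of_le_one (norm_nonneg l) hlt.le hm
    _ < 1 := by simpa using hlt
  have hs0 : 0 < ‖lm‖ := norm_pos_iff.mpr hlm0
  have hanorm : 0 < ‖a‖ := norm_pos_iff.mpr ha
  -- iterates of the dynamics
  have hiter : ∀ (n : ℕ) (t w : ℂ),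
      f (l ^ n * t, lm ^ n * w + (n : ℂ) * lm ^ n * lm⁻¹ * t ^ m) = a ^ n * f (t, w) := by
    intro n
    induction n with
    | zero => intro t w; simp
    | succ n ih =>
      intro t w
      have h1 := heq (l ^ n * t, lm ^ n * w + (n : ℂ) * lm ^ n * lm⁻¹ * t ^ m)
      simp only at h1
      have hpt1 : l ^ (n+1) * t = l * (l ^ n * t) := by ring
      have hc : (l ^ n * t) ^ m = lm ^ n * t ^ m := by
        rw [mul_pow, hlmdef, pow_right_comm]
      have hpt2 : lm ^ (n+1) * w + ((n+1 : ℕ) : ℂ) * lm ^ (n+1) * lm⁻¹ * t ^ m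
          = l ^ m * (lm ^ n * w + (n : ℂ) * lm ^ n * lm⁻¹ * t ^ m) + (l ^ n * t) ^ m := by
        rw [hc, ← hlmdef]
        push_cast
        field_simp
        ring
      rw [hpt1, hpt2, h1, ih t w]
      ring
  -- degree bound
  obtain ⟨d, hd⟩ : ∃ d : ℕ, ‖lm‖ ^ d ≤ ‖a‖ := by
    obtain ⟨d, hd⟩ := exists_pow_lt_of_lt_one hanorm hs1
    exact ⟨d, hd.le⟩
  -- slice regularity
  have hslice : ∀ t : ℂ, Differentiable ℂ (fun w => f (t, w)) :=
    fun t => hf.comp ((differentiable_const t).prodMk differentiable_id)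
  have hslice1 : ∀ w : ℂ, Differentiable ℂ (fun t => f (t, w)) :=
    fun w => hf.comp (differentiable_id.prodMk (differentiable_const w))
  -- polynomial growth of slices
  have hgrow : ∀ t : ℂ, ∃ M : ℝ, ∀ w : ℂ, ‖f (t, w)‖ ≤ M * (1 + ‖w‖) ^ d := by
    intro t
    -- bound for the drift term
    have htend : Filter.Tendsto (fun n : ℕ => (n : ℝ) * ‖lm‖ ^ n * (‖lm⁻¹‖ * ‖t ^ m‖))
        Filter.atTop (nhds 0) := by
      have hsum : Summable (fun n : ℕ => (n : ℝ) ^ 1 * ‖lm‖ ^ n) :=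
        summable_pow_mul_geometric_of_norm_lt_one 1
          (by rwa [Real.norm_eq_abs, abs_of_pos hs0])
      have h0 := hsum.tendsto_atTop_zero.mul_const (‖lm⁻¹‖ * ‖t ^ m‖)
      simpa using h0
    obtain ⟨K, hK⟩ := htend.bddAbove_range
    have hKb : ∀ n : ℕ, (n : ℝ) * ‖lm‖ ^ n * (‖lm⁻¹‖ * ‖t ^ m‖) ≤ K :=
      fun n => hK ⟨n, rfl⟩
    set R : ℝ := 1 + max K 0 with hRdef
    have hcomp : IsCompact (Metric.closedBall (0:ℂ) ‖t‖ ×ˢ Metric.closedBall (0:ℂ) R) :=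
      (isCompact_closedBall _ _).prod (isCompact_closedBall _ _)
    obtain ⟨M₀, hM₀⟩ := hcomp.exists_bound_of_continuousOn hf.continuous.continuousOn
    refine ⟨max M₀ 0 * max 1 ‖a‖⁻¹, fun w => ?_⟩
    have hex : ∃ n : ℕ, ‖lm‖ ^ n * ‖w‖ ≤ 1 := by
      obtain ⟨n, hn⟩ := exists_pow_lt_of_lt_one (show (0:ℝ) < 1/(‖w‖+1) by positivity) hs1
      refine ⟨n, ?_⟩
      have h1 : ‖lm‖ ^ n * ‖w‖ ≤ ‖lm‖ ^ n * (‖w‖ + 1) := by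
        apply mul_le_mul_of_nonneg_left (by linarith) (by positivity)
      have h2 : ‖lm‖ ^ n * (‖w‖ + 1) < 1 := by
        rw [div_eq_inv_mul, lt_inv_mul_iff₀ (by positivity : (0:ℝ) < ‖w‖+1)] at hn
        linarith [hn]
      linarith
    set n := Nat.find hex with hndef
    have hn : ‖lm‖ ^ n * ‖w‖ ≤ 1 := Nat.find_spec hex
    -- the iterated point lies in the compact set
    have hmem : (l ^ n * t, lm ^ n * w + (n : ℂ) * lm ^ n * lm⁻¹ * t ^ m) ∈
        (Metric.closedBall (0:ℂ) ‖t‖ ×ˢ Metric.closedBall (0:ℂ) R) := by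
      constructor
      · rw [Metric.mem_closedBall, _root_.dist_zero_right, norm_mul, norm_pow]
        calc ‖l‖ ^ n * ‖t‖ ≤ 1 * ‖t‖ := by
              apply mul_le_mul_of_nonneg_right _ (norm_nonneg t)
              exact pow_le_one₀ (norm_nonneg l) hlt.le
        _ = ‖t‖ := one_mul _
      · rw [Metric.mem_closedBall, _root_.dist_zero_right]
        calc ‖lm ^ n * w + (n : ℂ) * lm ^ n * lm⁻¹ * t ^ m‖
            ≤ ‖lm ^ n * w‖ + ‖(n : ℂ) * lm ^ n * lm⁻¹ * t ^ m‖ := norm_add_le _ _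
        _ ≤ 1 + max K 0 := by
            apply _root_.add_le_add
            · rw [norm_mul, norm_pow]; exact hn
            · have h3 : ‖(n : ℂ) * lm ^ n * lm⁻¹ * t ^ m‖
                  = (n : ℝ) * ‖lm‖ ^ n * (‖lm⁻¹‖ * ‖t ^ m‖) := by
                simp [norm_mul, norm_pow, Complex.norm_natCast]
                ring
              rw [h3]
              exact le_trans (hKb n) (le_max_left _ _)
        _ = R := hRdef.symm
    have hval := hiter n t w
    have hnorm1 : ‖a‖ ^ n * ‖f (t, w)‖ ≤ max M₀ 0 := by
      have h4 : ‖a ^ n * f (t, w)‖ ≤ M₀ := hval ▸ hM₀ _ hmem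
      rw [norm_mul, norm_pow] at h4
      exact le_trans h4 (le_max_left _ _)
    have hinv : (‖a‖ ^ n)⁻¹ ≤ max 1 ‖a‖⁻¹ * (1 + ‖w‖) ^ d := by
      have hwpow : (1:ℝ) ≤ (1 + ‖w‖) ^ d := one_le_pow₀ (by linarith [norm_nonneg w])
      rcases Nat.eq_zero_or_pos n with h0 | hpos
      · rw [h0]
        simp only [pow_zero, inv_one]
        calc (1:ℝ) ≤ 1 * 1 := by norm_num
        _ ≤ max 1 ‖a‖⁻¹ * (1 + ‖w‖) ^ d :=
            mul_le_mul (le_max_left _ _) hwpow zero_le_one (by positivity)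
      · obtain ⟨n', hn'⟩ : ∃ n', n = n' + 1 := ⟨n - 1, by omega⟩
        have hmin : ¬ (‖lm‖ ^ n' * ‖w‖ ≤ 1) := Nat.find_min hex (by omega)
        push_neg at hmin
        have hsp : (0:ℝ) < ‖lm‖ ^ n' := pow_pos hs0 _
        have h1 : (‖lm‖ ^ n')⁻¹ < ‖w‖ := by
          rw [inv_eq_one_div, div_lt_iff₀ hsp]
          nlinarith [hmin]
        have h5 : (‖a‖ ^ n)⁻¹ = ‖a‖⁻¹ * (‖a‖ ^ n')⁻¹ := by
          rw [hn', pow_succ]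
          rw [mul_inv]
          ring
        have h6 : (‖a‖ ^ n')⁻¹ ≤ ((‖lm‖ ^ d) ^ n')⁻¹ := by
          apply inv_anti₀ (by positivity)
          exact pow_le_pow_left₀ (by positivity) hd n'
        have h7 : ((‖lm‖ ^ d) ^ n')⁻¹ = ((‖lm‖ ^ n')⁻¹) ^ d := by
          rw [← pow_mul, mul_comm d n', pow_mul, inv_pow]
        have h8 : ((‖lm‖ ^ n')⁻¹) ^ d ≤ (1 + ‖w‖) ^ d := by
          apply pow_le_pow_left₀ (by positivity)
          linarith [norm_nonneg w]
        calc (‖a‖ ^ n)⁻¹ = ‖a‖⁻¹ * (‖a‖ ^ n')⁻¹ := h5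
        _ ≤ ‖a‖⁻¹ * (1 + ‖w‖) ^ d := by
            apply mul_le_mul_of_nonneg_left _ (by positivity)
            calc (‖a‖ ^ n')⁻¹ ≤ ((‖lm‖ ^ d) ^ n')⁻¹ := h6
            _ = ((‖lm‖ ^ n')⁻¹) ^ d := h7
            _ ≤ (1 + ‖w‖) ^ d := h8
        _ ≤ max 1 ‖a‖⁻¹ * (1 + ‖w‖) ^ d := by
            apply mul_le_mul_of_nonneg_right (le_max_right _ _) (by positivity)
    have hfin : ‖f (t, w)‖ ≤ max M₀ 0 * (‖a‖ ^ n)⁻¹ := by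
      rw [← mul_one ‖f (t,w)‖, ← inv_mul_cancel₀ (by positivity : (‖a‖:ℝ) ^ n ≠ 0)]
      calc ‖f (t,w)‖ * ((‖a‖ ^ n)⁻¹ * ‖a‖ ^ n) = (‖a‖ ^ n * ‖f (t,w)‖) * (‖a‖ ^ n)⁻¹ := by ring
      _ ≤ max M₀ 0 * (‖a‖ ^ n)⁻¹ := by
          apply mul_le_mul_of_nonneg_right hnorm1 (by positivity)
    calc ‖f (t, w)‖ ≤ max M₀ 0 * (‖a‖ ^ n)⁻¹ := hfin
    _ ≤ max M₀ 0 * (max 1 ‖a‖⁻¹ * (1 + ‖w‖) ^ d) := by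
        apply mul_le_mul_of_nonneg_left hinv (le_max_right _ _)
    _ = max M₀ 0 * max 1 ‖a‖⁻¹ * (1 + ‖w‖) ^ d := by ring
  -- coefficient functions
  obtain ⟨E, hE⟩ := vandermonde_recover d
  set b : ℕ → ℂ → ℂ := fun q t =>
    if h : q < d + 1 then ∑ i : Fin (d+1), E ⟨q, h⟩ i * f (t, ((i : ℕ) : ℂ)) else 0 with hbdef
  have hbdiff : ∀ q, Differentiable ℂ (b q) := by
    intro q
    rw [hbdef]
    by_cases h : q < d + 1
    · simp only [dif_pos h]
      exact Differentiable.fun_sum fun i _ => ((hslice1 _).const_mul _)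
    · simp only [dif_neg h]
      exact differentiable_const 0
  -- slice polynomial representation with entire coefficients
  have hF1 : ∀ t w : ℂ, f (t, w) = ∑ q ∈ Finset.range (d+1), b q t * w ^ q := by
    intro t w
    obtain ⟨M, hM⟩ := hgrow t
    have hu := hslice t
    have hhigh := entire_polygrowth d _ hu M hM
    have hrep := poly_rep hu d hhigh
    set β : ℕ → ℂ := fun q => (q ! : ℂ)⁻¹ * iteratedDeriv q (fun w => f (t, w)) 0 with hβdef
    have hrep' : ∀ w : ℂ, f (t, w) = ∑ q ∈ Finset.range (d+1), β q * w ^ q := by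
      intro w
      rw [hrep w]
    have hβb : ∀ (q : ℕ) (h : q < d+1), b q t = β q := by
      intro q hq
      have hrec := hE (fun p => β (p : ℕ)) ⟨q, hq⟩
      calc b q t = ∑ i : Fin (d+1), E ⟨q, hq⟩ i * f (t, ((i : ℕ) : ℂ)) := by
            rw [hbdef]; simp only [dif_pos hq]
      _ = ∑ i : Fin (d+1), E ⟨q, hq⟩ i * ∑ p : Fin (d+1), β (p : ℕ) * ((i : ℕ) : ℂ) ^ (p : ℕ) := by
            refine Finset.sum_congr rfl fun i _ => ?_
            congr 1
            rw [hrep' (((i : ℕ) : ℂ))]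
            rw [← Fin.sum_univ_eq_sum_range (fun p => β p * ((i : ℕ) : ℂ) ^ p) (d+1)]
      _ = β q := hrec.symm
    rw [hrep' w]
    refine Finset.sum_congr rfl fun q hq => ?_
    rw [hβb q (Finset.mem_range.mp hq)]
  -- coefficient functional equations
  have hco : ∀ j, j ≤ d → ∀ t : ℂ, a * b j t =
      ∑ q ∈ Finset.range (d+1), b q (l * t) * ((q.choose j : ℂ) * lm ^ j * (t ^ m) ^ (q - j)) := by
    intro j hj t
    have hPoly : (∑ q ∈ Finset.range (d+1), C (b q (l*t)) * (C lm * X + C (t^m)) ^ q)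
        = ∑ q ∈ Finset.range (d+1), C (a * b q t) * X ^ q := by
      apply Polynomial.funext
      intro w
      simp only [eval_finset_sum, eval_mul, eval_pow, eval_add, eval_C, eval_X]
      calc ∑ q ∈ Finset.range (d+1), b q (l*t) * (lm * w + t^m) ^ q
          = f (l*t, lm * w + t^m) := (hF1 _ _).symm
      _ = a * f (t, w) := by
          have h9 := heq (t, w)
          simp only at h9
          exact h9
      _ = ∑ q ∈ Finset.range (d+1), a * b q t * w ^ q := by
          rw [hF1 t w, Finset.mul_sum]
          exact Finset.sum_congr rfl fun q _ => by ring
    have hcoeff := congrArg (fun p => p.coeff j) hPoly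
    simp only [finset_sum_coeff, coeff_C_mul, coeff_CXC_pow, coeff_X_pow,
      mul_ite, mul_one, mul_zero] at hcoeff
    rw [Finset.sum_ite_eq (Finset.range (d+1)) j (fun q => a * b q t),
      if_pos (Finset.mem_range.mpr (by omega))] at hcoeff
    exact hcoeff.symm
  by_cases hall : ∀ q, q ≤ d → ∀ t, b q t = 0
  · left
    funext z
    have h1 := hF1 z.1 z.2
    rw [Prod.mk.eta] at h1
    rw [h1]
    have : ∀ q ∈ Finset.range (d+1), b q z.1 * z.2 ^ q = 0 := by
      intro q hq
      rw [hall q (by simpa using Nat.lt_succ_iff.mp (Finset.mem_range.mp hq)) z.1]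
      ring
    simp only [Finset.sum_congr rfl this, Finset.sum_const_zero, Pi.zero_apply]
  · right
    push_neg at hall
    obtain ⟨q₀, hq₀d, t₀, hbq₀⟩ := hall
    set P : ℕ → Prop := fun q => ¬ ∀ t, b q t = 0 with hPdef
    have hPq₀ : P q₀ := by intro hc; exact hbq₀ (hc t₀)
    set Q := Nat.findGreatest P d with hQdef
    have hPQ : P Q := Nat.findGreatest_spec hq₀d hPq₀
    have hQd : Q ≤ d := Nat.findGreatest_le d
    have hgt : ∀ q, Q < q → q ≤ d → ∀ t, b q t = 0 := by
      intro q h1 h2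
      have := Nat.findGreatest_is_greatest (P := P) h1 h2
      rw [hPdef] at this
      exact not_not.mp this
    -- top coefficient equation
    have hBQ : ∀ t, b Q (l * t) * lm ^ Q = a * b Q t := by
      intro t
      have h3 := hco Q hQd t
      rw [Finset.sum_eq_single Q] at h3
      · rw [h3]
        simp [Nat.choose_self]
      · intro q hq hqQ
        rcases lt_or_gt_of_ne hqQ with hlt' | hgt'
        · rw [Nat.choose_eq_zero_of_lt hlt']
          simp
        · rw [hgt q hgt' (by simpa using Nat.lt_succ_iff.mp (Finset.mem_range.mp hq)) (l*t)]
          ring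
      · intro hQmem
        exact absurd (Finset.mem_range.mpr (by omega)) hQmem
    have ha' : ∀ t, b Q (l * t) = (a * (lm ^ Q)⁻¹) * b Q t := by
      intro t
      apply mul_right_cancel₀ (pow_ne_zero Q hlm0)
      rw [hBQ t]
      field_simp
    obtain ⟨k, c, hc0, hbk, hGt⟩ := one_var hl0' hlt (a * (lm ^ Q)⁻¹) (b Q) (hbdiff Q) ha' hPQ
    have haQ : a = l ^ (m * Q + k) := by
      have h2 : a = l ^ k * lm ^ Q := by
        rw [← hbk]
        field_simp
      rw [h2, hlmdef, ← pow_mul, ← pow_add]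
      congr 1
      ring
    rcases Nat.eq_zero_or_pos Q with hQ0 | hQpos
    · -- Q = 0 : conclusion
      refine ⟨k, c, by rw [haQ, hQ0]; ring_nf, ?_⟩
      intro z
      have h1 := hF1 z.1 z.2
      rw [Prod.mk.eta] at h1
      rw [h1, Finset.sum_eq_single 0]
      · have := hGt z.1
        rw [hQ0] at this
        rw [this]
        ring
      · intro q hq hq0
        rw [hgt q (by omega) (by simpa using Nat.lt_succ_iff.mp (Finset.mem_range.mp hq)) z.1]
        ring
      · intro h0
        exact absurd (Finset.mem_range.mpr (by omega)) h0
    · -- Q ≥ 1 : contradiction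
      exfalso
      obtain ⟨Q', hQ'⟩ : ∃ Q', Q = Q' + 1 := ⟨Q - 1, by omega⟩
      have hQ'd : Q' ≤ d := by omega
      set H : ℂ → ℂ := b Q' with hHdef
      have hQQ' : Q' ≠ Q := by omega
      -- the subleading coefficient equation
      have hH : ∀ t : ℂ, H (l * t)
          = l ^ (k+m) * H t - ((Q : ℕ) : ℂ) * c * l ^ k * t ^ (k+m) := by
        intro t
        have h3 := hco Q' hQ'd t
        have hsub : Finset.sum (Finset.range (d+1))
            (fun q => b q (l * t) * ((q.choose Q' : ℂ) * lm ^ Q' * (t ^ m) ^ (q - Q')))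
            = ∑ q ∈ ({Q', Q} : Finset ℕ),
              b q (l * t) * ((q.choose Q' : ℂ) * lm ^ Q' * (t ^ m) ^ (q - Q')) := by
          symm
          apply Finset.sum_subset
          · intro x hx
            simp only [Finset.mem_insert, Finset.mem_singleton] at hx
            rcases hx with rfl | rfl
            · exact Finset.mem_range.mpr (by omega)
            · exact Finset.mem_range.mpr (by omega)
          · intro x hx hxne
            simp only [Finset.mem_insert, Finset.mem_singleton, not_or] at hxne
            obtain ⟨hx1, hx2⟩ := hxne
            rcases Nat.lt_or_ge x Q' with hlt' | hge'
            · rw [Nat.choose_eq_zero_of_lt hlt']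
              simp
            · have hxQ : Q < x := by omega
              rw [hgt x hxQ (by simpa using Nat.lt_succ_iff.mp (Finset.mem_range.mp hx)) (l*t)]
              ring
        rw [hsub, Finset.sum_pair hQQ'] at h3
        have hbQval : b Q (l * t) = c * l ^ k * t ^ k := by
          rw [hGt (l * t)]
          ring
        rw [hbQval] at h3
        simp only [Nat.choose_self, Nat.sub_self, pow_zero, Nat.cast_one, one_mul, mul_one,
          hQ', Nat.choose_succ_self_right, Nat.succ_sub (le_refl Q'), pow_one] at h3
        have haf : a = lm ^ Q' * l ^ (k+m) := by
          rw [haQ, hlmdef, ← pow_mul, ← pow_add, hQ']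
          congr 1
          ring
        rw [haf] at h3
        push_cast at h3
        apply mul_left_cancel₀ (pow_ne_zero Q' hlm0)
        rw [hQ']
        push_cast
        rw [show t ^ (k + m) = t ^ k * t ^ m from pow_add t k m]
        linear_combination -h3
      -- iterated derivative of order k+m at 0 yields the contradiction
      have hHd : Differentiable ℂ H := hbdiff Q'
      have e3 : (fun t => H (l * t))
          = fun t => l ^ (k+m) * H t - (((Q : ℕ) : ℂ) * c * l ^ k) * t ^ (k+m) := by
        funext t
        rw [hH t]
      have e1 : iteratedDeriv (k+m) (fun t => H (l * t)) 0
          = l ^ (k+m) * iteratedDeriv (k+m) H 0 := by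
        rw [iteratedDeriv_comp_const_mul hHd.contDiff l]
        simp
      have e2 : iteratedDeriv (k+m)
            (fun t => l ^ (k+m) * H t - (((Q : ℕ) : ℂ) * c * l ^ k) * t ^ (k+m)) 0
          = l ^ (k+m) * iteratedDeriv (k+m) H 0
            - (((Q : ℕ) : ℂ) * c * l ^ k) * ((k+m)! : ℂ) := by
        rw [my_sub ((hHd.const_mul _).contDiff)
          (((differentiable_pow (k+m)).const_mul _).contDiff) 0]
        rw [my_const_mul _ hHd.contDiff 0, my_const_mul _ ((differentiable_pow (k+m)).contDiff) 0]
        rw [iterDeriv_self_pow (k+m)]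
      have e4 : l ^ (k+m) * iteratedDeriv (k+m) H 0
          = l ^ (k+m) * iteratedDeriv (k+m) H 0
            - (((Q : ℕ) : ℂ) * c * l ^ k) * ((k+m)! : ℂ) := by
        conv_lhs => rw [← e1, e3, e2]
      have e5 : (((Q : ℕ) : ℂ) * c * l ^ k) * (((k+m)!) : ℂ) = 0 := by
        linear_combination e4
      have hQne : ((Q : ℕ) : ℂ) ≠ 0 := Nat.cast_ne_zero.mpr (by omega)
      have hKne : (((k+m)!) : ℂ) ≠ 0 := Nat.cast_ne_zero.mpr (Nat.factorial_ne_zero (k+m))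
      rcases mul_eq_zero.mp e5 with h6 | h6
      · rcases mul_eq_zero.mp h6 with h7 | h7
        · rcases mul_eq_zero.mp h7 with h8 | h8
          · exact hQne h8
          · exact hc0 h8
        · exact pow_ne_zero k hl0' h7
      · exact hKne h6
end
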